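/- arXiv:1604.07724 — 4 statements merged into one kernel-verified Lean document; each statement's English description precedes it below -/
import Mathlib

section
/- Let Π be a graph property, let H = (U, F) be a finite simple graph, let h ≥ 2, s ≥ 1 and s' ≥ 0 be integers, and let V be a finite set partitioned into pairwise disjoint sets {X_u : u ∈ U}, each of size s, together with a set Y of size s'. For each v ∈ U let G_v be a graph on vertex set V such that for every X ⊆ V with |X| ≥ h·s + s' it holds that G_v[X] ∈ Π if and only if X = Y ∪ ⋃_{u ∈ W''} X_u for some W'' ⊆ N_H(v), where N_H(v) is the neighborhood of v in H. Then there exists a set X ⊆ V with |X| ≥ h·s + s' such that G_v[X] ∈ Π for at least h vertices v ∈ U, if and only if H contains a biclique K_{h,h}, i.e., two disjoint sets C, D ⊆ U with |C| = |D| = h such that every vertex of C is adjacent in H to every vertex of D. -/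
/-! Since the blocks `Xu u` are nonempty and pairwise disjoint and miss `Y`, the set
`Y ∪ ⋃_{u ∈ W} Xu u` determines `W` and has `s' + |W| s` elements. So if `(G v)[X] ∈ P` for all
`v` in a set `S` of size `h`, then `X` is one such set, with `W` lying in the neighbourhood of every
`v ∈ S`, and `|X| ≥ h s + s'` forces `|W| ≥ h`; as `H` is loopless, `S` and `W` are disjoint and
contain the two sides of a `K_{h,h}`. Conversely the sides `C, D` of a biclique give
`X = Y ∪ ⋃_{u ∈ D} Xu u`. -/

open Finset Function

section BlockUnion

variable {ι α : Type*} [DecidableEq α] {X : ι → Finset α} {Y : Finset α}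

theorem card_union_biUnion_of_pairwise_disjoint (hX : Pairwise (Disjoint on X))
    (hY : ∀ u, Disjoint Y (X u)) {s : ℕ} (hs : ∀ u, #(X u) = s) (W : Finset ι) :
    #(Y ∪ W.biUnion X) = #Y + #W * s := by
  rw [card_union_of_disjoint ((disjoint_biUnion_right _ _ _).mpr fun u _ => hY u),
    card_biUnion (hX.set_pairwise _)]
  simp [hs]

theorem mem_union_biUnion_iff_of_pairwise_disjoint (hX : Pairwise (Disjoint on X))
    (hY : ∀ u, Disjoint Y (X u)) {W : Finset ι} {u : ι} {x : α} (hx : x ∈ X u) :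
    x ∈ Y ∪ W.biUnion X ↔ u ∈ W := by
  refine ⟨fun hxW => ?_, fun hu => mem_union_right _ (mem_biUnion.mpr ⟨u, hu, hx⟩)⟩
  rcases mem_union.mp hxW with hxY | hxW
  · exact absurd hx (disjoint_left.mp (hY u) hxY)
  · obtain ⟨u', hu', hxu'⟩ := mem_biUnion.mp hxW
    by_contra hu
    exact disjoint_left.mp (hX (ne_of_mem_of_not_mem hu' hu)) hxu' hx

theorem union_biUnion_injective_of_pairwise_disjoint (hX : Pairwise (Disjoint on X))
    (hY : ∀ u, Disjoint Y (X u)) (hne : ∀ u, (X u).Nonempty) :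
    Injective fun W : Finset ι => Y ∪ W.biUnion X := by
  intro W W' hWW'
  ext u
  obtain ⟨x, hx⟩ := hne u
  rw [← mem_union_biUnion_iff_of_pairwise_disjoint hX hY hx,
    ← mem_union_biUnion_iff_of_pairwise_disjoint hX hY hx]
  exact Iff.of_eq (congrArg (x ∈ ·) hWW')

end BlockUnion

theorem SimpleGraph.exists_biclique_of_forall_adj {U : Type*} (H : SimpleGraph U)
    {S W : Finset U} {h : ℕ} (hS : h ≤ #S) (hW : h ≤ #W)
    (hadj : ∀ v ∈ S, ∀ u ∈ W, H.Adj v u) :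
    ∃ C D : Finset U, Disjoint C D ∧ #C = h ∧ #D = h ∧ ∀ c ∈ C, ∀ d ∈ D, H.Adj c d := by
  obtain ⟨C, hCS, hC⟩ := exists_subset_card_eq hS
  obtain ⟨D, hDW, hD⟩ := exists_subset_card_eq hW
  refine ⟨C, D, Finset.disjoint_left.mpr fun v hvC hvD => ?_, hC, hD,
    fun c hc d hd => hadj c (hCS hc) d (hDW hd)⟩
  exact H.irrefl (hadj v (hCS hvC) v (hDW hvD))

theorem stmt_5_general
    (P : ∀ {β : Type} [Finite β], SimpleGraph β → Prop)
    (U : Type) (H : SimpleGraph U)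
    (h s s' : ℕ) (hh : 2 ≤ h) (hs : 1 ≤ s)
    (V : Type) [DecidableEq V]
    (Xu : U → Finset V) (Y : Finset V)
    (hXcard : ∀ u, (Xu u).card = s)
    (hYcard : Y.card = s')
    (hXdisj : ∀ u u', u ≠ u' → Disjoint (Xu u) (Xu u'))
    (hYdisj : ∀ u, Disjoint Y (Xu u))
    (G : U → SimpleGraph V)
    (hG : ∀ (v : U) (X : Finset V), h * s + s' ≤ X.card →
      (P ((G v).induce (↑X : Set V)) ↔
        ∃ W'' : Finset U, (∀ u ∈ W'', H.Adj v u) ∧ X = Y ∪ W''.biUnion Xu)) :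
    (∃ X : Finset V, h * s + s' ≤ X.card ∧
        ∃ S : Finset U, h ≤ S.card ∧ ∀ v ∈ S, P ((G v).induce (↑X : Set V))) ↔
      ∃ C D : Finset U, Disjoint C D ∧ C.card = h ∧ D.card = h ∧
        ∀ c ∈ C, ∀ d ∈ D, H.Adj c d := by
  have hcard := card_union_biUnion_of_pairwise_disjoint hXdisj hYdisj hXcard
  constructor
  · rintro ⟨X, hX, S, hS, hSP⟩
    obtain ⟨v₀, hv₀⟩ : S.Nonempty := card_pos.mp (by omega)
    obtain ⟨W, -, rfl⟩ := (hG v₀ _ hX).mp (hSP v₀ hv₀)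
    have hadj : ∀ v ∈ S, ∀ u ∈ W, H.Adj v u := by
      intro v hv
      obtain ⟨W', hW'adj, hWW'⟩ := (hG v _ hX).mp (hSP v hv)
      rwa [union_biUnion_injective_of_pairwise_disjoint hXdisj hYdisj
        (fun u => card_pos.mp (by rw [hXcard]; exact hs)) hWW']
    have hW : h ≤ #W := by
      rw [hcard, hYcard] at hX
      exact Nat.le_of_mul_le_mul_right (by omega) hs
    exact H.exists_biclique_of_forall_adj hS hW hadj
  · rintro ⟨C, D, -, hC, hD, hCD⟩
    have hX : h * s + s' ≤ #(Y ∪ D.biUnion Xu) := by rw [hcard, hYcard, hD]; omega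
    exact ⟨_, hX, C, hC.ge, fun v hv => (hG v _ hX).mpr ⟨D, hCD v hv, rfl⟩⟩

/-- core of the general hardness reduction, Theorem 5 of the
paper. Let `P` be a graph property, `H` a finite graph on vertex set `U`,
`h ≥ 2`, `s ≥ 1`, `s' ≥ 0`, and let the finite set `V` be partitioned into
pairwise disjoint sets `Xu u` (`u ∈ U`), each of size `s`, together with a set
`Y` of size `s'`. Suppose for each `v ∈ U` the graph `G v` on `V` satisfies: for
every `X ⊆ V` with `|X| ≥ h·s + s'`, `(G v)[X] ∈ P` iff
`X = Y ∪ ⋃_{u ∈ W''} Xu u` for some `W'' ⊆ N_H(v)`. Then there is `X ⊆ V` with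
`|X| ≥ h·s + s'` such that `(G v)[X] ∈ P` for at least `h` vertices `v ∈ U`, iff
`H` contains a biclique `K_{h,h}`. -/
theorem stmt_5
    (P : ∀ {β : Type} [Finite β], SimpleGraph β → Prop)
    (U : Type) [Fintype U] [DecidableEq U] (H : SimpleGraph U)
    (h s s' : ℕ) (hh : 2 ≤ h) (hs : 1 ≤ s)
    (V : Type) [Fintype V] [DecidableEq V]
    (Xu : U → Finset V) (Y : Finset V)
    (hXcard : ∀ u, (Xu u).card = s)
    (hYcard : Y.card = s')
    (hXdisj : ∀ u u', u ≠ u' → Disjoint (Xu u) (Xu u'))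
    (hYdisj : ∀ u, Disjoint Y (Xu u))
    (hcover : Y ∪ Finset.univ.biUnion Xu = Finset.univ)
    (G : U → SimpleGraph V)
    (hG : ∀ (v : U) (X : Finset V), h * s + s' ≤ X.card →
      (P ((G v).induce (↑X : Set V)) ↔
        ∃ W'' : Finset U, (∀ u ∈ W'', H.Adj v u) ∧ X = Y ∪ W''.biUnion Xu)) :
    (∃ X : Finset V, h * s + s' ≤ X.card ∧
        ∃ S : Finset U, h ≤ S.card ∧ ∀ v ∈ S, P ((G v).induce (↑X : Set V))) ↔
      ∃ C D : Finset U, Disjoint C D ∧ C.card = h ∧ D.card = h ∧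
        ∀ c ∈ C, ∀ d ∈ D, H.Adj c d :=
  stmt_5_general P U H h s s' hh hs V Xu Y hXcard hYcard hXdisj hYdisj G hG
end

section
/- Let G_1 = (V, E_1) and G_2 = (V, E_2) be graphs on the same finite vertex set V with n = |V|. Define the graph G' = (V', E') with V' = {v_1, v_2 : v ∈ V} and E' = {{v_1, v_2} : v ∈ V} ∪ {{u_i, v_i} : {u, v} ∈ E_i, i ∈ {1, 2}}, and define edge weights w by w({v_1, v_2}) = n for each v ∈ V and w({u_i, v_i}) = n + 1 for each {u, v} ∈ E_i. Then for every positive integer k: there exists a set X ⊆ V with |X| ≥ k such that both induced subgraphs G_1[X] and G_2[X] have perfect matchings, if and only if G' has a matching of total w-weight at least n² + k. -/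
/-- The auxiliary graph `G'` of Lemma 10: vertex set `V × Fin 2` (two copies of
`V`), with an edge `{v₁, v₂}` between the two copies of each `v ∈ V`, and an
edge `{uᵢ, vᵢ}` inside copy `i` for each edge `{u, v}` of `Gᵢ`. -/
def stmt9Graph (V : Type) (G1 G2 : SimpleGraph V) : SimpleGraph (V × Fin 2) :=
  SimpleGraph.fromRel (fun a b =>
    a.1 = b.1 ∨
      (a.2 = b.2 ∧ a.2 = 0 ∧ G1.Adj a.1 b.1) ∨
      (a.2 = b.2 ∧ a.2 = 1 ∧ G2.Adj a.1 b.1))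

/-- The edge weights of Lemma 10: weight `n` on the edges `{v₁, v₂}` joining the
two copies of a vertex, and weight `n + 1` on all other (layer) edges. -/
noncomputable def stmt9Weight (V : Type) [DecidableEq V] (n : ℕ) :
    Sym2 (V × Fin 2) → ℕ :=
  Sym2.lift ⟨fun a b => if a.1 = b.1 then n else n + 1, by
    intro a b
    by_cases hab : a.1 = b.1 <;> simp [hab, eq_comm]⟩

/-! For a matching `M` of `G'`, let `Y` be the set of `v` whose two copies are matched to each
other, and `Xᵢ` the set of `v` whose copy in layer `i` is matched inside layer `i`. Then `Y` is
disjoint from `X₁ ∪ X₂`, layer `i` of `M` is a perfect matching of `Gᵢ[Xᵢ]`, and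
`2 w(M) = 2n|Y| + (n + 1)(|X₁| + |X₂|)`. As `|Y| ≤ n - |X₁ ∪ X₂|`, this is at most `2n² + 2|X₁|`
when `X₁ = X₂`. When `X₁ ≠ X₂`, the parity of `|X₁|` and `|X₂|` forces
`|X₁ ∪ X₂| ≥ |X₁ ∩ X₂| + 2`, and the weight drops below `n²`. Conversely, perfect matchings of
`G₁[X]` and `G₂[X]` together with the edges `v₁v₂`, `v ∉ X`, form a matching of weight
`n² + |X|`. -/

open Finset SimpleGraph

theorem SimpleGraph.Subgraph.IsMatching.sum_toEdge {W β : Type*} [AddCommMonoid β]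
    {G : SimpleGraph W} {M : G.Subgraph} (hM : M.IsMatching) [Fintype M.verts]
    [Fintype M.edgeSet] (f : Sym2 W → β) :
    ∑ v : M.verts, f (hM.toEdge v) = 2 • ∑ e : M.edgeSet, f e := by
  classical
  rw [← sum_fiberwise univ hM.toEdge, smul_sum]
  refine sum_congr rfl fun e _ => ?_
  rw [sum_congr rfl fun v hv => by rw [(mem_filter.1 hv).2], sum_const]
  congr 1
  obtain ⟨e, he⟩ := e
  induction e using Sym2.ind with
  | _ u w =>
    have hfiber : ({v | hM.toEdge v = ⟨s(u, w), he⟩} : Finset M.verts) =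
        {⟨u, he.fst_mem⟩, ⟨w, he.snd_mem⟩} := by
      ext v
      simpa using Set.ext_iff.1 (hM.toEdge_preimage_singleton he) v
    rw [hfiber, card_pair (by simpa using he.ne)]

theorem Fin.eq_rev_iff_ne_of_two {i j : Fin 2} : j = i.rev ↔ i ≠ j := by
  revert i j
  decide

theorem eq_and_le_card_of_weight_bound {α : Type*} [DecidableEq α] {A B : Finset α}
    {y n k : ℕ} (hA : Even #A) (hB : Even #B) (hk : 1 ≤ k) (hsize : y + #(A ∪ B) ≤ n)
    (hweight : 2 * n ^ 2 + 2 * k ≤ 2 * n * y + (n + 1) * (#A + #B)) : A = B ∧ k ≤ #A := by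
  have hsum := card_union_add_card_inter A B
  by_cases hAB : A = B
  · subst hAB
    rw [union_self] at hsize
    exact ⟨rfl, by nlinarith⟩
  · have hlt : #(A ∩ B) < #(A ∪ B) :=
      card_lt_card (ssubset_of_subset_of_ne inter_subset_union fun h => hAB
        (subset_antisymm (subset_union_left.trans (h ▸ inter_subset_right))
          (subset_union_right.trans (h ▸ inter_subset_left))))
    obtain ⟨a, ha⟩ := hA
    obtain ⟨b, hb⟩ := hB
    -- `#(A ∪ B) - #(A ∩ B) = #A + #B - 2 * #(A ∩ B)` is even and positive
    have hgap : #(A ∩ B) + 2 ≤ #(A ∪ B) := by omega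
    nlinarith [Nat.mul_le_mul_left n hsize, Nat.mul_le_mul_left (n + 1) hgap]

namespace stmt9Graph

variable {V : Type} {G1 G2 : SimpleGraph V}

theorem adj_iff {a b : V × Fin 2} :
    (stmt9Graph V G1 G2).Adj a b ↔
      a ≠ b ∧ (a.1 = b.1 ∨ a.2 = b.2 ∧ (![G1, G2] a.2).Adj a.1 b.1) := by
  obtain ⟨u, i⟩ := a
  obtain ⟨w, j⟩ := b
  simp only [stmt9Graph, fromRel_adj, ne_eq]
  fin_cases i <;> fin_cases j <;> simp [eq_comm, adj_comm]

def matchingOfLayers (X : Finset V) (P : ∀ i, ((![G1, G2] i).induce (X : Set V)).Subgraph) :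
    (stmt9Graph V G1 G2).Subgraph where
  verts := Set.univ
  Adj a b := (a.1 = b.1 ∧ a.2 ≠ b.2 ∧ a.1 ∉ X) ∨
    (a.2 = b.2 ∧ ∃ ha hb, (P a.2).Adj ⟨a.1, ha⟩ ⟨b.1, hb⟩)
  adj_sub := by
    rintro ⟨u, i⟩ ⟨w, j⟩ (⟨rfl, hij, -⟩ | ⟨rfl, hu, hw, h⟩)
    · exact adj_iff.2 ⟨by simpa using hij, .inl rfl⟩
    · have hG : (![G1, G2] i).Adj u w := (P i).adj_sub h
      exact adj_iff.2 ⟨by simpa using hG.ne, .inr ⟨rfl, hG⟩⟩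
  edge_vert _ := Set.mem_univ _
  symm := ⟨by
    rintro ⟨u, i⟩ ⟨w, j⟩ (⟨rfl, hij, hu⟩ | ⟨rfl, hu, hw, h⟩)
    · exact .inl ⟨rfl, hij.symm, hu⟩
    · exact .inr ⟨rfl, hw, hu, h.symm⟩⟩

theorem isMatching_matchingOfLayers {X : Finset V}
    {P : ∀ i, ((![G1, G2] i).induce (X : Set V)).Subgraph} (hP : ∀ i, (P i).IsPerfectMatching) :
    (matchingOfLayers X P).IsMatching := by
  rintro ⟨v, i⟩ -
  by_cases hv : v ∈ X
  · obtain ⟨w, hw, huniq⟩ := Subgraph.isPerfectMatching_iff.1 (hP i) ⟨v, hv⟩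
    refine ⟨(w.1, i), .inr ⟨rfl, hv, w.2, hw⟩, ?_⟩
    rintro ⟨u, j⟩ (⟨-, -, hv'⟩ | ⟨rfl, _, hu, hvu⟩)
    · exact absurd hv hv'
    · rw [← huniq ⟨u, hu⟩ hvu]
  · refine ⟨(v, i.rev), .inl ⟨rfl, Fin.eq_rev_iff_ne_of_two.1 rfl, hv⟩, ?_⟩
    rintro ⟨u, j⟩ (⟨rfl, hij, -⟩ | ⟨-, hv', -⟩)
    · exact Prod.ext rfl (Fin.eq_rev_iff_ne_of_two.2 hij)
    · exact absurd hv' hv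

variable [Fintype V] {M : (stmt9Graph V G1 G2).Subgraph}

open Classical in
noncomputable def crossSet (M : (stmt9Graph V G1 G2).Subgraph) : Finset V :=
  {v | M.Adj (v, 0) (v, 1)}

open Classical in
noncomputable def layerSet (M : (stmt9Graph V G1 G2).Subgraph) (i : Fin 2) : Finset V :=
  {v | ∃ u, M.Adj (v, i) (u, i)}

theorem mem_crossSet_iff {v : V} {i : Fin 2} : v ∈ crossSet M ↔ M.Adj (v, i) (v, i.rev) := by
  fin_cases i <;> simp [crossSet, M.adj_comm]

theorem mem_layerSet_iff {v : V} {i : Fin 2} :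
    v ∈ layerSet M i ↔ ∃ u, M.Adj (v, i) (u, i) := by
  simp [layerSet]

theorem eq_iff_mem_crossSet (hM : M.IsMatching) {u w : V} {i j : Fin 2}
    (huw : M.Adj (u, i) (w, j)) : u = w ↔ u ∈ crossSet M := by
  have hne := (adj_iff.1 (M.adj_sub huw)).1
  constructor
  · rintro rfl
    rwa [mem_crossSet_iff, ← Fin.eq_rev_iff_ne_of_two.2 fun hij : i = j => hne (by rw [hij])]
  · intro hu
    exact congrArg Prod.fst (hM.eq_of_adj_left (mem_crossSet_iff.1 hu) huw)

theorem disjoint_crossSet_layerSet (hM : M.IsMatching) (i : Fin 2) :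
    Disjoint (crossSet M) (layerSet M i) := by
  refine disjoint_left.2 fun v hv hvi => ?_
  obtain ⟨u, hu⟩ := mem_layerSet_iff.1 hvi
  refine (adj_iff.1 (M.adj_sub hu)).1 ?_
  rw [(eq_iff_mem_crossSet hM hu).2 hv]

theorem mem_verts_iff (hM : M.IsMatching) {v : V} {i : Fin 2} :
    (v, i) ∈ M.verts ↔ v ∈ crossSet M ∨ v ∈ layerSet M i := by
  refine ⟨fun hv => ?_, ?_⟩
  · obtain ⟨⟨w, j⟩, hvw, -⟩ := hM hv
    by_cases hvw' : v = w
    · exact .inl ((eq_iff_mem_crossSet hM hvw).1 hvw')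
    · obtain ⟨-, h | ⟨rfl : i = j, -⟩⟩ := adj_iff.1 (M.adj_sub hvw)
      · exact absurd h hvw'
      · exact .inr (mem_layerSet_iff.2 ⟨w, hvw⟩)
  · rintro (hv | hv)
    · exact M.edge_vert (mem_crossSet_iff.1 hv)
    · exact M.edge_vert (mem_layerSet_iff.1 hv).choose_spec

theorem exists_isPerfectMatching_layerSet (hM : M.IsMatching) (i : Fin 2) :
    ∃ P : ((![G1, G2] i).induce (layerSet M i : Set V)).Subgraph, P.IsPerfectMatching := by
  refine ⟨{ verts := Set.univ
            Adj := fun x y => M.Adj (x.1, i) (y.1, i)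
            adj_sub := fun {x y} h => ?_
            edge_vert := fun _ => Set.mem_univ _
            symm := ⟨fun x y h => h.symm⟩ }, ?_⟩
  · obtain ⟨hne, h | ⟨-, hG⟩⟩ := adj_iff.1 (M.adj_sub h)
    · exact absurd (Prod.ext h rfl) hne
    · exact hG
  · rw [Subgraph.isPerfectMatching_iff]
    rintro ⟨v, hv⟩
    obtain ⟨u, hu⟩ := mem_layerSet_iff.1 (mem_coe.1 hv)
    refine ⟨⟨u, mem_layerSet_iff.2 ⟨v, hu.symm⟩⟩, hu, fun w hw => Subtype.ext ?_⟩
    exact congrArg Prod.fst (hM.eq_of_adj_left hw hu)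

theorem layerSet_matchingOfLayers {X : Finset V}
    {P : ∀ i, ((![G1, G2] i).induce (X : Set V)).Subgraph} (hP : ∀ i, (P i).IsPerfectMatching) (i : Fin 2) :
    layerSet (matchingOfLayers X P) i = X := by
  ext v
  simp only [mem_layerSet_iff, matchingOfLayers, ne_eq, not_true_eq_false, false_and, and_false,
    false_or, true_and]
  refine ⟨fun ⟨_, hv, _⟩ => hv, fun hv => ?_⟩
  obtain ⟨w, hw, -⟩ := Subgraph.isPerfectMatching_iff.1 (hP i) ⟨v, hv⟩
  exact ⟨w.1, hv, w.2, hw⟩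

variable [DecidableEq V]

theorem card_crossSet_add_card_union_le (hM : M.IsMatching) :
    #(crossSet M) + #(layerSet M 0 ∪ layerSet M 1) ≤ Fintype.card V := by
  rw [← card_union_of_disjoint (disjoint_union_right.2
    ⟨disjoint_crossSet_layerSet hM 0, disjoint_crossSet_layerSet hM 1⟩)]
  exact card_le_univ _

theorem weight_toEdge (hM : M.IsMatching) (n : ℕ) (a : M.verts) :
    stmt9Weight V n (hM.toEdge a) = if a.1.1 ∈ crossSet M then n else n + 1 := by
  obtain ⟨⟨v, i⟩, hv⟩ := a
  obtain ⟨⟨w, j⟩, hvw, -⟩ := hM hv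
  rw [hM.toEdge_eq_of_adj hvw]
  exact if_congr (eq_iff_mem_crossSet hM hvw) rfl rfl

theorem two_mul_sum_weight (hM : M.IsMatching) (n : ℕ) :
    2 * ∑ e ∈ (Set.toFinite M.edgeSet).toFinset, stmt9Weight V n e =
      2 * n * #(crossSet M) + (n + 1) * (#(layerSet M 0) + #(layerSet M 1)) := by
  classical
  have hvertex (v : V) (i : Fin 2) :
      (if (v, i) ∈ M.verts then (if v ∈ crossSet M then n else n + 1) else 0) =
        (if v ∈ crossSet M then n else 0) + (if v ∈ layerSet M i then n + 1 else 0) := by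
    have hdisj : v ∈ crossSet M → v ∉ layerSet M i := fun h =>
      disjoint_left.1 (disjoint_crossSet_layerSet hM i) h
    rw [mem_verts_iff hM]
    split_ifs <;> simp_all
  calc 2 * ∑ e ∈ (Set.toFinite M.edgeSet).toFinset, stmt9Weight V n e
      = ∑ a : M.verts, stmt9Weight V n (hM.toEdge a) := by
        rw [hM.sum_toEdge, smul_eq_mul, sum_subtype _ fun e => Set.Finite.mem_toFinset _]
    _ = ∑ a : V × Fin 2, if a ∈ M.verts then (if a.1 ∈ crossSet M then n else n + 1) else 0 := by
        simp only [weight_toEdge hM]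
        rw [← sum_filter, sum_subtype (univ.filter (· ∈ M.verts)) (p := (· ∈ M.verts)) (by simp)]
    _ = ∑ i : Fin 2, ∑ v : V,
          ((if v ∈ crossSet M then n else 0) + (if v ∈ layerSet M i then n + 1 else 0)) := by
        simp only [Fintype.sum_prod_type_right, hvertex]
    _ = _ := by
        simp [sum_add_distrib, Fin.sum_univ_two]
        ring

theorem crossSet_matchingOfLayers {X : Finset V}
    {P : ∀ i, ((![G1, G2] i).induce (X : Set V)).Subgraph} :
    crossSet (matchingOfLayers X P) = Xᶜ := by
  ext v
  simp [crossSet, matchingOfLayers]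

theorem sum_weight_matchingOfLayers {X : Finset V}
    {P : ∀ i, ((![G1, G2] i).induce (X : Set V)).Subgraph} (hP : ∀ i, (P i).IsPerfectMatching) :
    ∑ e ∈ (Set.toFinite (matchingOfLayers X P).edgeSet).toFinset,
        stmt9Weight V (Fintype.card V) e = Fintype.card V ^ 2 + #X := by
  have hW := two_mul_sum_weight (isMatching_matchingOfLayers hP) (Fintype.card V)
  rw [crossSet_matchingOfLayers, layerSet_matchingOfLayers hP, layerSet_matchingOfLayers hP,
    card_compl] at hW
  have hXV := card_le_univ X
  have hsq : 2 * Fintype.card V * (Fintype.card V - #X) + (Fintype.card V + 1) * (#X + #X) =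
      2 * (Fintype.card V ^ 2 + #X) := by
    zify [hXV]
    ring
  omega

end stmt9Graph

open stmt9Graph

/-- Lemma 10 of the paper. For graphs `G1, G2` on a common
vertex set `V` with `n = |V|` and every positive integer `k`: there is `X ⊆ V`
with `|X| ≥ k` such that both `G1[X]` and `G2[X]` have perfect matchings, iff
the auxiliary weighted graph `G'` has a matching of total weight at least
`n² + k`. -/
theorem stmt_9 (V : Type) [Fintype V] [DecidableEq V] (G1 G2 : SimpleGraph V)
    (n : ℕ) (hn : n = Fintype.card V) (k : ℕ) (hk : 1 ≤ k) :
    (∃ X : Finset V, k ≤ X.card ∧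
        (∃ M : (G1.induce (↑X : Set V)).Subgraph, M.IsPerfectMatching) ∧
        (∃ M : (G2.induce (↑X : Set V)).Subgraph, M.IsPerfectMatching)) ↔
      ∃ M : (stmt9Graph V G1 G2).Subgraph, M.IsMatching ∧
        n ^ 2 + k ≤ ∑ e ∈ (Set.toFinite M.edgeSet).toFinset, stmt9Weight V n e := by
  subst hn
  constructor
  · rintro ⟨X, hkX, hX1, hX2⟩
    have hX : ∀ i, ∃ P : ((![G1, G2] i).induce (X : Set V)).Subgraph, P.IsPerfectMatching :=
      Fin.forall_fin_two.2 ⟨hX1, hX2⟩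
    choose P hP using hX
    refine ⟨matchingOfLayers X P, isMatching_matchingOfLayers hP, ?_⟩
    rw [sum_weight_matchingOfLayers hP]
    omega
  · rintro ⟨M, hM, hW⟩
    obtain ⟨P0, hP0⟩ := exists_isPerfectMatching_layerSet hM 0
    obtain ⟨P1, hP1⟩ := exists_isPerfectMatching_layerSet hM 1
    obtain ⟨hEq, hkX⟩ := eq_and_le_card_of_weight_bound (by simpa using hP0.even_card)
      (by simpa using hP1.even_card) hk (card_crossSet_add_card_union_le hM)
      (by linarith [two_mul_sum_weight hM (Fintype.card V)])
    exact ⟨layerSet M 0, hkX, ⟨P0, hP0⟩, hEq ▸ ⟨P1, hP1⟩⟩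
end

section
/- For every integer c ≥ 2 and every integer n ≥ c + 1 such that c·n is even, there exists a connected c-regular graph on n vertices. -/
/-!
Take the circulant graph on `ℤ/n` with jumps `±1, …, ±⌊c/2⌋`, plus the antipodal jump `n/2`
when `c` is odd (then `n` is even). Since `c < n` these `c` jumps are distinct and nonzero, so
the graph is `c`-regular, and the jump `1` makes it contain the Hamiltonian cycle.
-/

open Finset

namespace SimpleGraph

variable {G : Type*} [AddGroup G]

theorem circulantGraph_mono {s t : Set G} (h : s ⊆ t) : circulantGraph s ≤ circulantGraph t := by
  intro u v huv
  rw [circulantGraph_adj] at huv ⊢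
  exact ⟨huv.1, huv.2.imp (@h _) (@h _)⟩

theorem circulantGraph_neighborSet {s : Set G} (hs : -s = s) (h0 : 0 ∉ s) (v : G) :
    (circulantGraph s).neighborSet v = (· + v) '' s := by
  ext w
  have hsub : v - w ∈ s ↔ w - v ∈ s := by rw [← neg_sub, ← Set.mem_neg, hs]
  simp only [mem_neighborSet, circulantGraph_adj, hsub, or_self, Set.image_add_right,
    Set.mem_preimage, ← sub_eq_add_neg]
  exact and_iff_right_of_imp fun h hvw => h0 (by rwa [hvw, sub_self] at h)

theorem ncard_neighborSet_circulantGraph {s : Set G} (hs : -s = s) (h0 : 0 ∉ s) (v : G) :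
    ((circulantGraph s).neighborSet v).ncard = s.ncard := by
  rw [circulantGraph_neighborSet hs h0, Set.ncard_image_of_injective _ (add_left_injective v)]

theorem circulantGraph_connected_of_one_mem {n : ℕ} {s : Set (Fin (n + 1))} (hs : 1 ∈ s) :
    (circulantGraph s).Connected := by
  refine cycleGraph_connected.mono ?_
  rw [cycleGraph_eq_circulantGraph]
  exact circulantGraph_mono (Set.singleton_subset_iff.2 hs)

end SimpleGraph

section JumpSet

variable {n : ℕ} {S : Finset ℕ}

def IsSymmJumps (n : ℕ) (S : Finset ℕ) : Prop := ∀ k ∈ S, 0 < k ∧ k < n ∧ n - k ∈ S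

theorem IsSymmJumps.neg_preimage_val [NeZero n] (hS : IsSymmJumps n S) :
    -(Fin.val ⁻¹' (S : Set ℕ) : Set (Fin n)) = Fin.val ⁻¹' (S : Set ℕ) := by
  have key : ∀ x : Fin n, (x : ℕ) ∈ S → ((-x : Fin n) : ℕ) ∈ S := fun x hx => by
    have := hS _ hx
    rw [Fin.val_neg, if_neg (by rintro rfl; simp at this)]
    exact this.2.2
  ext x
  exact ⟨fun hx => by simpa using key _ hx, key x⟩

theorem IsSymmJumps.zero_notMem_preimage_val [NeZero n] (hS : IsSymmJumps n S) :
    (0 : Fin n) ∉ Fin.val ⁻¹' (S : Set ℕ) := fun h => (hS 0 h).1.ne rfl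

theorem IsSymmJumps.ncard_preimage_val (hS : IsSymmJumps n S) :
    (Fin.val ⁻¹' (S : Set ℕ) : Set (Fin n)).ncard = S.card := by
  rw [Set.ncard_preimage_of_injective_subset_range Fin.val_injective, Set.ncard_coe_finset]
  rw [Fin.range_val]
  exact fun k hk => (hS k hk).2.1

theorem card_Icc_union_Icc_sub {m n : ℕ} (h : 2 * m < n) :
    (Icc 1 m ∪ Icc (n - m) (n - 1)).card = 2 * m := by
  rw [card_union_of_disjoint, Nat.card_Icc, Nat.card_Icc]
  · omega
  · exact disjoint_left.2 fun k hk hk' => by simp only [mem_Icc] at hk hk'; omega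

theorem exists_isSymmJumps (c n : ℕ) (hc : 2 ≤ c) (hn : c + 1 ≤ n) (he : Even (c * n)) :
    ∃ S : Finset ℕ, IsSymmJumps n S ∧ 1 ∈ S ∧ S.card = c := by
  obtain ⟨m, rfl | rfl⟩ := Nat.even_or_odd' c
  · refine ⟨Icc 1 m ∪ Icc (n - m) (n - 1), fun k hk => ?_, ?_, card_Icc_union_Icc_sub (by omega)⟩
    · simp only [mem_union, mem_Icc] at hk ⊢; omega
    · simp only [mem_union, mem_Icc]; omega
  · -- `c` odd forces `n` even, and the extra jump is the antipode `n / 2`.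
    obtain ⟨r, rfl⟩ : Even n := (Nat.even_mul.1 he).resolve_left (by simp)
    refine ⟨insert r (Icc 1 m ∪ Icc (r + r - m) (r + r - 1)), fun k hk => ?_, ?_, ?_⟩
    · simp only [mem_insert, mem_union, mem_Icc] at hk ⊢; omega
    · simp only [mem_insert, mem_union, mem_Icc]; omega
    · rw [card_insert_of_notMem (by simp only [mem_union, mem_Icc]; omega),
        card_Icc_union_Icc_sub (by omega)]

end JumpSet

/-- For every integer `c ≥ 2` and every `n ≥ c + 1` with `c·n`
even, there exists a connected `c`-regular graph on `n` vertices. -/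
theorem stmt_12 (c n : ℕ) (hc : 2 ≤ c) (hn : c + 1 ≤ n) (he : Even (c * n)) :
    ∃ G : SimpleGraph (Fin n), G.Connected ∧ ∀ v, (G.neighborSet v).ncard = c := by
  obtain ⟨S, hS, h1, hcard⟩ := exists_isSymmJumps c n hc hn he
  obtain ⟨k, rfl⟩ : ∃ k, n = k + 2 := ⟨n - 2, by omega⟩
  refine ⟨SimpleGraph.circulantGraph (Fin.val ⁻¹' (S : Set ℕ)),
    SimpleGraph.circulantGraph_connected_of_one_mem (by simpa using h1), fun v => ?_⟩
  rw [SimpleGraph.ncard_neighborSet_circulantGraph hS.neg_preimage_val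
    hS.zero_notMem_preimage_val, hS.ncard_preimage_val, hcard]
end

section
/- Let h ≥ 4 be an even integer and let H be an h-partite graph whose vertex set is partitioned into color classes U_1, …, U_h (every edge of H joins two different classes). Construct a vertex set V as follows: for each color j and each u ∈ U_j, a set V_u = {v_{u,j'} : j' ∈ {1,…,h} \ {j}} of h−1 new vertices, together with color vertices w_1, …, w_h, all pairwise distinct. Let G_1 and G_2 be graphs on V such that for each color j and each u ∈ U_j the union G_1 ∪ G_2 restricted to {w_j} ∪ V_u is a cycle of length h whose edges alternate between G_1 and G_2, these cycles for distinct vertices u of H are pairwise edge-disjoint and share only the color vertex of their common color, and G_1 and G_2 have no other edges. Let G_3 be the graph on V whose edge set consists exactly of the edges {v_{u,j'}, v_{u',j}} for every edge {u, u'} of H with u ∈ U_j and u' ∈ U_{j'}, together with the edges {w_j, w_{j+h/2}} for 1 ≤ j ≤ h/2. Then H contains a clique with exactly one vertex from each color class U_1, …, U_h if and only if there exists a set X ⊆ V with |X| ≥ h² such that each of G_1[X], G_2[X], and G_3[X] has a perfect matching. -/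
/-!
A multicolored clique `f` yields the set `X` of the `h` gadget cycles of `f 0, …, f (h - 1)`,
which has `h²` vertices: `G1` and `G2` match every cycle along its alternate edges, and `G3`
matches `v_{f j, j'}` with `v_{f j', j}` and `w_j` with `w_{j + h/2}`.

Conversely, a vertex `v_{u,j'}` has no `G1`- or `G2`-neighbours outside the cycle of `u`, so the
perfect matchings of `G1[X]` and `G2[X]` force `X` to contain the whole cycle of every `u` it
meets. The first vertex of that cycle can only be `G1`-matched to `w_{color u}`, so `X` meets at
most one gadget per color. Hence `v_{u,j'} ↦ (color u, j')`, `w_j ↦ (j, j)` is injective on `X`,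
and `|X| ≥ h²` makes it onto: for every color `j` the set `X` meets the gadget of exactly one
`f j`, and contains all the `v_{f j, j'}`. The `G3`-partner of `v_{f j, j'}` is a vertex
`v_{u', j}` with `u' ∈ U_{j'}` adjacent to `f j`, and `u' = f j'`.
-/

/-- Vertex set of the reduction of Theorem 12 (matching case): one vertex
`⟨(u, j')⟩` for every vertex `u` of `H` and every color `j'` other than the color
of `u`, together with one color vertex `Sum.inr j` for every color `j`. -/
def Stmt13.Vt (h : ℕ) (U : Type) (color : U → Fin h) : Type :=
  {p : U × Fin h // p.2 ≠ color p.1} ⊕ Fin h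

open Function

namespace Fin

variable {n : ℕ} [NeZero n]

theorem val_add_one_mod_two_ne (hn : Even n) (i : Fin n) : (i + 1).val % 2 ≠ i.val % 2 := by
  obtain ⟨k, rfl⟩ := hn
  have hi := i.isLt
  have hk : 1 < k + k := by have := NeZero.ne (k + k); omega
  rw [Fin.val_add, Fin.val_one', Nat.mod_eq_of_lt hk]
  rcases Nat.lt_or_ge (i.val + 1) (k + k) with hlt | hge
  · rw [Nat.mod_eq_of_lt hlt]; omega
  · rw [show i.val + 1 = k + k by omega, Nat.mod_self]; omega

theorem val_sub_one_mod_two_ne (hn : Even n) (i : Fin n) : (i - 1).val % 2 ≠ i.val % 2 := by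
  simpa using (val_add_one_mod_two_ne hn (i - 1)).symm

def cyclePartner (r : ℕ) (i : Fin n) : Fin n := if i.val % 2 = r then i + 1 else i - 1

theorem cyclePartner_involutive (hn : Even n) {r : ℕ} (hr : r < 2) :
    Involutive (cyclePartner r : Fin n → Fin n) := by
  intro i
  have h₁ := val_add_one_mod_two_ne hn i
  have h₂ := val_sub_one_mod_two_ne hn i
  unfold cyclePartner
  split_ifs <;> first | omega | simp

theorem add_add_of_val_eq_half (hn : Even n) {c : Fin n} (hc : c.val = n / 2) (i : Fin n) :
    i + c + c = i := by
  obtain ⟨k, rfl⟩ := hn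
  rw [add_assoc, add_eq_left]
  ext
  rw [Fin.val_add, hc, Fin.val_zero, show (k + k) / 2 + (k + k) / 2 = k + k by omega,
    Nat.mod_self]

theorem val_add_eq_or_of_val_eq_half (hn : Even n) {c : Fin n} (hc : c.val = n / 2) (i : Fin n) :
    (i + c).val = i.val + n / 2 ∨ i.val = (i + c).val + n / 2 := by
  obtain ⟨k, rfl⟩ := hn
  have hi := i.isLt
  rw [Fin.val_add, hc]
  rcases Nat.lt_or_ge (i.val + (k + k) / 2) (k + k) with hlt | hge
  · exact .inl (Nat.mod_eq_of_lt hlt)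
  · right
    rw [Nat.mod_eq_sub_mod hge, Nat.mod_eq_of_lt (by omega)]
    omega

end Fin

namespace SimpleGraph

variable {V : Type*} {G : SimpleGraph V}

theorem exists_isPerfectMatching_of_involutive {m : V → V} (hm : Involutive m)
    (hadj : ∀ v, G.Adj v (m v)) : ∃ M : G.Subgraph, M.IsPerfectMatching :=
  ⟨{ verts := Set.univ
     Adj := fun v w => w = m v
     adj_sub := by rintro v _ rfl; exact hadj v
     edge_vert := fun _ => trivial
     symm := ⟨fun v w (hvw : w = m v) => by rw [hvw, hm]⟩ },
    Subgraph.isPerfectMatching_iff.2 fun _ => existsUnique_eq⟩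

theorem exists_isPerfectMatching_induce {s : Set V} {m : V → V} (hmaps : Set.MapsTo m s s)
    (hm : ∀ v ∈ s, m (m v) = v) (hadj : ∀ v ∈ s, G.Adj v (m v)) :
    ∃ M : (G.induce s).Subgraph, M.IsPerfectMatching :=
  exists_isPerfectMatching_of_involutive (m := hmaps.restrict) (fun v => Subtype.ext (hm v v.2))
    (fun v => hadj v v.2)

theorem exists_isPerfectMatching_induce_range {α : Type*} {e : α → V} (he : Injective e)
    {τ : α → α} (hτ : Involutive τ) (hadj : ∀ a, G.Adj (e a) (e (τ a))) :
    ∃ M : (G.induce (Set.range e)).Subgraph, M.IsPerfectMatching := by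
  refine exists_isPerfectMatching_induce (m := extend e (e ∘ τ) id) ?_ ?_ ?_ <;>
    rintro _ ⟨a, rfl⟩
  · exact ⟨τ a, (he.extend_apply (e ∘ τ) id a).symm⟩
  · simp [he.extend_apply, hτ a]
  · simpa [he.extend_apply] using hadj a

theorem Subgraph.IsPerfectMatching.exists_adj_of_mem_induce {s : Set V}
    {M : (G.induce s).Subgraph} (hM : M.IsPerfectMatching) {v : V} (hv : v ∈ s) :
    ∃ w ∈ s, G.Adj v w :=
  let ⟨w, hw, _⟩ := hM.1 (hM.2 ⟨v, hv⟩)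
  ⟨w, w.2, M.adj_sub hw⟩

end SimpleGraph

namespace Stmt13

open SimpleGraph

variable {h : ℕ} {U : Type} {color : U → Fin h}

def IsEdgeGraph (H : SimpleGraph U) (G : SimpleGraph (Vt h U color)) : Prop :=
  ∀ a b, G.Adj a b ↔
    ((∃ p q : {p : U × Fin h // p.2 ≠ color p.1},
        a = Sum.inl p ∧ b = Sum.inl q ∧ H.Adj p.1.1 q.1.1 ∧
        p.1.2 = color q.1.1 ∧ q.1.2 = color p.1.1) ∨
      (∃ j j' : Fin h, a = Sum.inr j ∧ b = Sum.inr j' ∧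
        (j'.val = j.val + h / 2 ∨ j.val = j'.val + h / 2)))

def gadgetVertex (cyc : U → Fin h → Vt h U color) (f : Fin h → U) (q : Fin h × Fin h) :
    Vt h U color :=
  cyc (f q.1) q.2

theorem IsEdgeGraph.exists_adj_inl {H : SimpleGraph U} {G : SimpleGraph (Vt h U color)}
    (hG : IsEdgeGraph H G) {X : Set (Vt h U color)} {M : (G.induce X).Subgraph}
    (hM : M.IsPerfectMatching) {p : {p : U × Fin h // p.2 ≠ color p.1}} (hp : Sum.inl p ∈ X) :
    ∃ q : {p : U × Fin h // p.2 ≠ color p.1},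
      Sum.inl q ∈ X ∧ H.Adj p.1.1 q.1.1 ∧ p.1.2 = color q.1.1 := by
  obtain ⟨y, hy, hadj⟩ := hM.exists_adj_of_mem_induce hp
  obtain ⟨p', q, hp', rfl, hH, hpq, -⟩ | ⟨_, _, hp', -⟩ := (hG _ _).1 hadj
  · cases hp'
    exact ⟨q, hy, hH, hpq⟩
  · cases hp'

theorem exists_inl_mem_of_card_le {X : Finset (Vt h U color)} (hX : h ^ 2 ≤ X.card)
    (hsame : ∀ p q : {p : U × Fin h // p.2 ≠ color p.1},
      Sum.inl p ∈ X → Sum.inl q ∈ X → color p.1.1 = color q.1.1 → p.1.1 = q.1.1)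
    {j j' : Fin h} (hjj' : j ≠ j') :
    ∃ p : {p : U × Fin h // p.2 ≠ color p.1},
      Sum.inl p ∈ X ∧ color p.1.1 = j ∧ p.1.2 = j' := by
  let code : Vt h U color → Fin h × Fin h :=
    Sum.elim (fun p => (color p.1.1, p.1.2)) (fun j => (j, j))
  have hinj : Set.InjOn code X := by
    rintro (p | i) hp (q | i') hq hpq <;> simp only [code, Sum.elim_inl, Sum.elim_inr,
      Prod.mk.injEq] at hpq
    · exact congrArg Sum.inl (Subtype.ext (Prod.ext (hsame p q hp hq hpq.1) hpq.2))
    · exact absurd (hpq.2.trans hpq.1.symm) p.2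
    · exact absurd (hpq.2.symm.trans hpq.1) q.2
    · rw [hpq.1]
  obtain ⟨x, hx, hcode⟩ := Finset.surjOn_of_injOn_of_card_le code
    (fun _ _ => Finset.mem_coe.2 (Finset.mem_univ _)) hinj (by simpa [sq] using hX)
    (Finset.mem_coe.2 (Finset.mem_univ (j, j')))
  rcases x with p | i
  · simp only [code, Sum.elim_inl, Prod.mk.injEq] at hcode
    exact ⟨p, hx, hcode⟩
  · simp only [code, Sum.elim_inr, Prod.mk.injEq] at hcode
    exact absurd (hcode.1.symm.trans hcode.2) hjj'

theorem exists_multicolored_clique {H : SimpleGraph U} (hh : 2 ≤ h)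
    {X : Finset (Vt h U color)} (hX : h ^ 2 ≤ X.card)
    (hsame : ∀ p q : {p : U × Fin h // p.2 ≠ color p.1},
      Sum.inl p ∈ X → Sum.inl q ∈ X → color p.1.1 = color q.1.1 → p.1.1 = q.1.1)
    (hpartner : ∀ p : {p : U × Fin h // p.2 ≠ color p.1}, Sum.inl p ∈ X →
      ∃ q : {p : U × Fin h // p.2 ≠ color p.1},
        Sum.inl q ∈ X ∧ H.Adj p.1.1 q.1.1 ∧ p.1.2 = color q.1.1) :
    ∃ f : Fin h → U, (∀ j, color (f j) = j) ∧
      ∀ j j', j ≠ j' → H.Adj (f j) (f j') := by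
  have : Nontrivial (Fin h) := Fin.nontrivial_iff_two_le.2 hh
  have hrep : ∀ j, ∃ p : {p : U × Fin h // p.2 ≠ color p.1},
      Sum.inl p ∈ X ∧ color p.1.1 = j :=
    fun j =>
      let ⟨p, hp, hpj, _⟩ := exists_inl_mem_of_card_le hX hsame (exists_ne j).choose_spec.symm
      ⟨p, hp, hpj⟩
  choose g hgX hgc using hrep
  refine ⟨fun j => (g j).1.1, hgc, fun j j' hjj' => ?_⟩
  obtain ⟨p, hpX, hpj, hpj'⟩ := exists_inl_mem_of_card_le hX hsame hjj'
  obtain ⟨q, hqX, hadj, hq⟩ := hpartner p hpX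
  show H.Adj (g j).1.1 (g j').1.1
  rwa [← hsame p (g j) hpX (hgX j) (hpj.trans (hgc j).symm),
    ← hsame q (g j') hqX (hgX j') (by rw [← hq, hpj', hgc])]

variable [NeZero h]

structure IsGadgetEnumeration (cyc : U → Fin h → Vt h U color) : Prop where
  injective (u : U) : Injective (cyc u)
  apply_zero (u : U) : cyc u 0 = Sum.inr (color u)
  range_eq (u : U) : Set.range (cyc u) =
    insert (Sum.inr (color u) : Vt h U color)
      {x | ∃ p : {p : U × Fin h // p.2 ≠ color p.1}, p.1.1 = u ∧ x = Sum.inl p}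

def IsCycleHalf (G : SimpleGraph (Vt h U color)) (cyc : U → Fin h → Vt h U color)
    (r : ℕ) : Prop :=
  ∀ a b, G.Adj a b ↔ ∃ (u : U) (i : Fin h), i.val % 2 = r ∧
    ((a = cyc u i ∧ b = cyc u (i + 1)) ∨ (b = cyc u i ∧ a = cyc u (i + 1)))

variable {cyc : U → Fin h → Vt h U color}

namespace IsGadgetEnumeration

theorem owner_eq (hc : IsGadgetEnumeration cyc) {u : U} {i : Fin h}
    {p : {p : U × Fin h // p.2 ≠ color p.1}}
    (hp : cyc u i = Sum.inl p) : p.1.1 = u := by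
  have hmem : Sum.inl p ∈ Set.range (cyc u) := ⟨i, hp⟩
  rw [hc.range_eq u] at hmem
  rcases hmem with hp | ⟨q, rfl, hq⟩
  · cases hp
  · cases hq
    rfl

theorem exists_apply_eq_inl (hc : IsGadgetEnumeration cyc)
    (p : {p : U × Fin h // p.2 ≠ color p.1}) : ∃ i, cyc p.1.1 i = Sum.inl p := by
  have hmem : (Sum.inl p : Vt h U color) ∈ Set.range (cyc p.1.1) := by
    rw [hc.range_eq]
    exact .inr ⟨p, rfl, rfl⟩
  exact hmem

theorem ne_zero_of_apply_eq_inl (hc : IsGadgetEnumeration cyc) {u : U} {i : Fin h}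
    {p : {p : U × Fin h // p.2 ≠ color p.1}} (hp : cyc u i = Sum.inl p) : i ≠ 0 := by
  rintro rfl
  rw [hc.apply_zero] at hp
  cases hp

theorem eq_of_apply_eq (hc : IsGadgetEnumeration cyc) {u u' : U} {i i' : Fin h} (hi : i ≠ 0)
    (he : cyc u i = cyc u' i') : u = u' ∧ i = i' := by
  have hmem : cyc u i ∈ Set.range (cyc u) := ⟨i, rfl⟩
  rw [hc.range_eq u] at hmem
  rcases hmem with hw | ⟨p, rfl, hp⟩
  · exact absurd (hc.injective u (hw.trans (hc.apply_zero u).symm)) hi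
  · obtain rfl := hc.owner_eq (he.symm.trans hp)
    exact ⟨rfl, hc.injective _ he⟩

end IsGadgetEnumeration

namespace IsCycleHalf

variable {G : SimpleGraph (Vt h U color)} {r : ℕ}

theorem adj_cyclePartner (hG : IsCycleHalf G cyc r) (hh : Even h) (hr : r < 2) (u : U)
    (i : Fin h) : G.Adj (cyc u i) (cyc u (Fin.cyclePartner r i)) := by
  unfold Fin.cyclePartner
  split_ifs with hi
  · exact (hG _ _).2 ⟨u, i, hi, .inl ⟨rfl, rfl⟩⟩
  · have := Fin.val_sub_one_mod_two_ne hh i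
    exact (hG _ _).2 ⟨u, i - 1, by omega, .inr ⟨rfl, by rw [sub_add_cancel]⟩⟩

theorem eq_cyc_sub_one_of_adj (hG : IsCycleHalf G cyc r) (hc : IsGadgetEnumeration cyc)
    {u : U} {i : Fin h} {y : Vt h U color} (hi : i ≠ 0) (hr : i.val % 2 ≠ r)
    (hadj : G.Adj (cyc u i) y) : y = cyc u (i - 1) := by
  obtain ⟨u', k, hk, ⟨he, rfl⟩ | ⟨rfl, he⟩⟩ := (hG _ _).1 hadj
  · obtain ⟨rfl, rfl⟩ := hc.eq_of_apply_eq hi he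
    exact absurd hk hr
  · obtain ⟨rfl, rfl⟩ := hc.eq_of_apply_eq hi he
    rw [add_sub_cancel_right]

end IsCycleHalf

section Forward

variable {f : Fin h → U}

theorem gadgetVertex_injective (hc : IsGadgetEnumeration cyc) (hf : ∀ j, color (f j) = j) :
    Injective (gadgetVertex cyc f) := by
  rintro ⟨j, i⟩ ⟨j', i'⟩ he
  by_cases hi : i = 0
  · by_cases hi' : i' = 0
    · subst hi hi'
      simp only [gadgetVertex] at he
      rw [hc.apply_zero, hc.apply_zero, hf, hf] at he
      cases he
      rfl
    · exact absurd (hc.eq_of_apply_eq hi' he.symm).2 (hi ▸ hi')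
  · obtain ⟨hu, rfl⟩ := hc.eq_of_apply_eq hi he
    rw [← hf j, ← hf j', hu]

theorem inl_mem_range_gadgetVertex_iff (hc : IsGadgetEnumeration cyc)
    (hf : ∀ j, color (f j) = j) {p : {p : U × Fin h // p.2 ≠ color p.1}} :
    Sum.inl p ∈ Set.range (gadgetVertex cyc f) ↔ f (color p.1.1) = p.1.1 := by
  constructor
  · rintro ⟨⟨j, i⟩, hji⟩
    rw [hc.owner_eq hji, hf]
  · intro hp
    obtain ⟨i, hi⟩ := hc.exists_apply_eq_inl p
    exact ⟨(color p.1.1, i), by rw [gadgetVertex, hp, hi]⟩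

theorem inr_mem_range_gadgetVertex (hc : IsGadgetEnumeration cyc) (hf : ∀ j, color (f j) = j)
    (j : Fin h) : Sum.inr j ∈ Set.range (gadgetVertex cyc f) :=
  ⟨(j, 0), by rw [gadgetVertex, hc.apply_zero, hf]⟩

theorem IsCycleHalf.exists_isPerfectMatching {G : SimpleGraph (Vt h U color)} {r : ℕ}
    (hG : IsCycleHalf G cyc r) (hc : IsGadgetEnumeration cyc) (hf : ∀ j, color (f j) = j)
    (hh : Even h) (hr : r < 2) :
    ∃ M : (G.induce (Set.range (gadgetVertex cyc f))).Subgraph, M.IsPerfectMatching :=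
  exists_isPerfectMatching_induce_range (gadgetVertex_injective hc hf)
    (Involutive.prodMap (f := id) (fun _ => rfl) (Fin.cyclePartner_involutive hh hr))
    (fun q => hG.adj_cyclePartner hh hr (f q.1) q.2)

theorem IsEdgeGraph.exists_isPerfectMatching {H : SimpleGraph U}
    {G : SimpleGraph (Vt h U color)} (hG : IsEdgeGraph H G) (hc : IsGadgetEnumeration cyc)
    (hf : ∀ j, color (f j) = j) (hH : ∀ j j', j ≠ j' → H.Adj (f j) (f j')) (hh : Even h) :
    ∃ M : (G.induce (Set.range (gadgetVertex cyc f))).Subgraph, M.IsPerfectMatching := by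
  let c : Fin h := ⟨h / 2, Nat.div_lt_self (NeZero.pos h) one_lt_two⟩
  have hc' : c.val = h / 2 := rfl
  let m : Vt h U color → Vt h U color :=
    Sum.elim (fun p => Sum.inl ⟨(f p.1.2, color p.1.1), by rw [hf]; exact p.2.symm⟩)
      (fun j => Sum.inr (j + c))
  refine exists_isPerfectMatching_induce (m := m) ?_ ?_ ?_
  · rintro (p | j) -
    · exact (inl_mem_range_gadgetVertex_iff hc hf).2 (by simp [hf])
    · exact inr_mem_range_gadgetVertex hc hf _
  · rintro (p | j) hp
    · have hp' := (inl_mem_range_gadgetVertex_iff hc hf).1 hp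
      exact congrArg Sum.inl (Subtype.ext (Prod.ext hp' (hf _)))
    · exact congrArg Sum.inr (Fin.add_add_of_val_eq_half hh hc' j)
  · rintro (p | j) hp
    · refine (hG _ _).2 (.inl ⟨p, _, rfl, rfl, ?_, (hf _).symm, rfl⟩)
      have hadj := hH (color p.1.1) p.1.2 p.2.symm
      rwa [(inl_mem_range_gadgetVertex_iff hc hf).1 hp] at hadj
    · exact (hG _ _).2 (.inr ⟨j, j + c, rfl, rfl, Fin.val_add_eq_or_of_val_eq_half hh hc' j⟩)

end Forward

section Backward

variable {G1 G2 : SimpleGraph (Vt h U color)} {X : Set (Vt h U color)}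
  {M1 : (G1.induce X).Subgraph} {M2 : (G2.induce X).Subgraph}

theorem cyc_sub_one_mem (hc : IsGadgetEnumeration cyc) (hG1 : IsCycleHalf G1 cyc 0)
    (hG2 : IsCycleHalf G2 cyc 1) (hM1 : M1.IsPerfectMatching) (hM2 : M2.IsPerfectMatching)
    {u : U} {i : Fin h} (hi : i ≠ 0) (hx : cyc u i ∈ X) : cyc u (i - 1) ∈ X := by
  rcases Nat.mod_two_eq_zero_or_one i.val with hr | hr
  · obtain ⟨y, hy, hadj⟩ := hM2.exists_adj_of_mem_induce hx
    rwa [← hG2.eq_cyc_sub_one_of_adj hc hi (by omega) hadj]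
  · obtain ⟨y, hy, hadj⟩ := hM1.exists_adj_of_mem_induce hx
    rwa [← hG1.eq_cyc_sub_one_of_adj hc hi (by omega) hadj]

theorem cyc_one_mem (hc : IsGadgetEnumeration cyc) (hG1 : IsCycleHalf G1 cyc 0)
    (hG2 : IsCycleHalf G2 cyc 1) (hM1 : M1.IsPerfectMatching) (hM2 : M2.IsPerfectMatching)
    {u : U} {i : Fin h} (hi : i ≠ 0) (hx : cyc u i ∈ X) : cyc u 1 ∈ X := by
  obtain ⟨n, hn⟩ := Nat.exists_eq_add_one_of_ne_zero (Fin.val_ne_zero_iff.2 hi)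
  induction n generalizing i with
  | zero =>
    have h1 : (1 : Fin h).val = 1 := by rw [Fin.val_one', Nat.mod_eq_of_lt (by omega)]
    rwa [← Fin.ext (hn.trans h1.symm)]
  | succ n ih =>
    have hval : (i - 1).val = n + 1 := by rw [Fin.val_sub_one_of_ne_zero hi]; omega
    exact ih (Fin.val_ne_zero_iff.1 (by omega)) (cyc_sub_one_mem hc hG1 hG2 hM1 hM2 hi hx) hval

theorem owner_eq_of_color_eq (hc : IsGadgetEnumeration cyc) (hG1 : IsCycleHalf G1 cyc 0)
    (hG2 : IsCycleHalf G2 cyc 1) (hM1 : M1.IsPerfectMatching) (hM2 : M2.IsPerfectMatching)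
    {p q : {p : U × Fin h // p.2 ≠ color p.1}} (hp : Sum.inl p ∈ X) (hq : Sum.inl q ∈ X)
    (hpq : color p.1.1 = color q.1.1) : p.1.1 = q.1.1 := by
  have h1 : (1 : Fin h).val = 1 := by
    have := Fin.nontrivial_iff_two_le.1 ⟨⟨_, _, p.2⟩⟩
    rw [Fin.val_one', Nat.mod_eq_of_lt (by omega)]
  have h10 : (1 : Fin h) ≠ 0 := fun h10 => by simp [h10] at h1
  have one_mem : ∀ r : {p : U × Fin h // p.2 ≠ color p.1},
      Sum.inl r ∈ X → cyc r.1.1 1 ∈ X := by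
    intro r hr
    obtain ⟨i, hi⟩ := hc.exists_apply_eq_inl r
    exact cyc_one_mem hc hG1 hG2 hM1 hM2 (hc.ne_zero_of_apply_eq_inl hi) (hi ▸ hr)
  -- in `G1` the only neighbour of `cyc u 1` is the color vertex `cyc u 0`
  have mate : ∀ {u : U} (hu : cyc u 1 ∈ X),
      ∃ y, M1.Adj ⟨cyc u 1, hu⟩ y ∧ y.1 = Sum.inr (color u) := fun hu => by
    obtain ⟨y, hy, -⟩ := hM1.1 (hM1.2 ⟨_, hu⟩)
    refine ⟨y, hy, ?_⟩
    rw [← hc.apply_zero, ← sub_self (1 : Fin h)]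
    exact hG1.eq_cyc_sub_one_of_adj hc h10 (by omega) (M1.adj_sub hy)
  obtain ⟨y, hy, hyw⟩ := mate (one_mem p hp)
  obtain ⟨y', hy', hy'w⟩ := mate (one_mem q hq)
  obtain rfl : y = y' := Subtype.ext (by rw [hyw, hy'w, hpq])
  exact (hc.eq_of_apply_eq h10 (congrArg Subtype.val (hM1.1.eq_of_adj_right hy hy'))).1

end Backward

end Stmt13

/-- Theorem 12 of the paper, matching case. Let `h ≥ 4` be
even and let `H` be an `h`-partite graph with coloring `color`. Let `G1`, `G2` be
graphs on the constructed vertex set such that for each vertex `u` of `H` their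
union restricted to `{w_{color u}} ∪ V_u` is a cycle of length `h` (given by the
enumeration `cyc u`, starting at the color vertex) whose edges alternate between
`G1` and `G2`, and `G1`, `G2` have no other edges.  Let `G3` have exactly the
edges `{v_{u,j'}, v_{u',j}}` for each edge `{u, u'}` of `H` with `u ∈ U_j`,
`u' ∈ U_{j'}`, together with the edges `{w_j, w_{j + h/2}}` for `j < h/2`.
Then `H` has a multicolored clique iff there is a vertex set `X` of size at
least `h²` such that `G1[X]`, `G2[X]` and `G3[X]` all have perfect matchings. -/
theorem stmt_13 (h : ℕ) (hh : 4 ≤ h) (hhe : Even h)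
    (U : Type)
    (H : SimpleGraph U) (color : U → Fin h)
    (G1 G2 G3 : SimpleGraph (Stmt13.Vt h U color))
    (cyc : U → Fin h → Stmt13.Vt h U color)
    (hinj : ∀ u, Function.Injective (cyc u))
    (hstart : ∀ u, cyc u ⟨0, by omega⟩ = Sum.inr (color u))
    (hrange : ∀ u, Set.range (cyc u) =
      insert (Sum.inr (color u) : Stmt13.Vt h U color)
        {x | ∃ p : {p : U × Fin h // p.2 ≠ color p.1}, p.1.1 = u ∧ x = Sum.inl p})
    (hG1 : ∀ a b, G1.Adj a b ↔ ∃ (u : U) (i : Fin h), i.val % 2 = 0 ∧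
      ((a = cyc u i ∧ b = cyc u (i + ⟨1, by omega⟩)) ∨
        (b = cyc u i ∧ a = cyc u (i + ⟨1, by omega⟩))))
    (hG2 : ∀ a b, G2.Adj a b ↔ ∃ (u : U) (i : Fin h), i.val % 2 = 1 ∧
      ((a = cyc u i ∧ b = cyc u (i + ⟨1, by omega⟩)) ∨
        (b = cyc u i ∧ a = cyc u (i + ⟨1, by omega⟩))))
    (hG3 : ∀ a b, G3.Adj a b ↔
      ((∃ p q : {p : U × Fin h // p.2 ≠ color p.1},
          a = Sum.inl p ∧ b = Sum.inl q ∧ H.Adj p.1.1 q.1.1 ∧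
          p.1.2 = color q.1.1 ∧ q.1.2 = color p.1.1) ∨
        (∃ j j' : Fin h, a = Sum.inr j ∧ b = Sum.inr j' ∧
          (j'.val = j.val + h / 2 ∨ j.val = j'.val + h / 2)))) :
    (∃ f : Fin h → U, (∀ j, color (f j) = j) ∧
        ∀ j j', j ≠ j' → H.Adj (f j) (f j')) ↔
      ∃ X : Finset (Stmt13.Vt h U color),
        h ^ 2 ≤ X.card ∧
        (∃ M : (G1.induce (↑X : Set (Stmt13.Vt h U color))).Subgraph,
          M.IsPerfectMatching) ∧
        (∃ M : (G2.induce (↑X : Set (Stmt13.Vt h U color))).Subgraph,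
          M.IsPerfectMatching) ∧
        (∃ M : (G3.induce (↑X : Set (Stmt13.Vt h U color))).Subgraph,
          M.IsPerfectMatching) := by
  classical
  have : NeZero h := ⟨by omega⟩
  have hone : (⟨1, by omega⟩ : Fin h) = 1 :=
    Fin.ext (by rw [Fin.val_one', Nat.mod_eq_of_lt]; omega)
  simp only [hone] at hG1 hG2
  have hc : Stmt13.IsGadgetEnumeration cyc := ⟨hinj, hstart, hrange⟩
  have hG1 : Stmt13.IsCycleHalf G1 cyc 0 := hG1
  have hG2 : Stmt13.IsCycleHalf G2 cyc 1 := hG2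
  have hG3 : Stmt13.IsEdgeGraph H G3 := hG3
  constructor
  · rintro ⟨f, hf, hH⟩
    refine ⟨Finset.univ.image (Stmt13.gadgetVertex cyc f), ?_, ?_⟩
    · rw [Finset.card_image_of_injective _ (Stmt13.gadgetVertex_injective hc hf)]
      simp [sq]
    · rw [Finset.coe_image, Finset.coe_univ, Set.image_univ]
      exact ⟨hG1.exists_isPerfectMatching hc hf hhe (by norm_num),
        hG2.exists_isPerfectMatching hc hf hhe (by norm_num),
        hG3.exists_isPerfectMatching hc hf hH hhe⟩
  · rintro ⟨X, hX, ⟨M1, hM1⟩, ⟨M2, hM2⟩, ⟨M3, hM3⟩⟩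
    exact Stmt13.exists_multicolored_clique (by omega) hX
      (fun p q hp hq => Stmt13.owner_eq_of_color_eq hc hG1 hG2 hM1 hM2 hp hq)
      (fun p hp => hG3.exists_adj_inl hM3 hp)
end
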